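/- arXiv:1412.3975 — 2 statements merged into one kernel-verified Lean document; each statement's English description precedes it below -/
import Mathlib

section
/- Let n : U → ℝ^d be a C¹ unit normal field (|n(x)| = 1 for all x) on an open set U ⊆ ℝ^d, and let P(x) = E - n(x) n(x)ᵀ. Define κ := Tr(P ∇n) (the mean curvature). Then for each i, ((P∇)ᵀ P)_i := Σ_{k,j} P_{jk} ∇_j P_{ik} = -κ n_i; that is, (P∇)ᵀP = -κ n. -/
open Matrix

/-! Differentiating `P = E - n nᵀ` entrywise gives `∇_j P_{ik} = -(n_i ∇_j n_k + n_k ∇_j n_i)`.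
Contracting with `P_{jk}`, the first term yields `-n_i Tr(P ∇n) = -κ n_i`, while the second
vanishes because `P n = 0` for a unit vector `n`. -/

theorem one_sub_vecMulVec_self_mulVec_self {ι R : Type*} [Fintype ι] [DecidableEq ι] [Ring R]
    {u : ι → R} (hu : u ⬝ᵥ u = 1) : (1 - vecMulVec u u) *ᵥ u = 0 := by
  rw [sub_mulVec, one_mulVec, vecMulVec_mulVec, hu]
  simp

theorem fderiv_one_sub_vecMulVec_self_apply {ι 𝕜 E : Type*} [DecidableEq ι]
    [NontriviallyNormedField 𝕜] [NormedAddCommGroup E] [NormedSpace 𝕜 E] {n : E → ι → 𝕜}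
    {x : E} (hn : ∀ k, DifferentiableAt 𝕜 (fun y => n y k) x) (i k : ι) (v : E) :
    fderiv 𝕜 (fun y => (1 - vecMulVec (n y) (n y)) i k) x v
      = -(n x i * fderiv 𝕜 (fun y => n y k) x v + n x k * fderiv 𝕜 (fun y => n y i) x v) := by
  have hentry : (fun y => (1 - vecMulVec (n y) (n y)) i k)
      = fun y => (1 : Matrix ι ι 𝕜) i k - n y i * n y k := by
    funext y
    rw [Matrix.sub_apply, vecMulVec_apply]
  rw [hentry, fderiv_const_sub, fderiv_fun_mul (hn i) (hn k)]
  simp only [_root_.neg_apply, _root_.add_apply, _root_.smul_apply, smul_eq_mul]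

/-- Curvature lemma: for a `C¹` unit normal field `n` on an open set `U ⊆ ℝ^d` with
tangential projection `P(x) = E - n(x)n(x)ᵀ` and mean curvature `κ := Tr(P ∇n)`,
one has `((P∇)ᵀP)_i = Σ_{k,j} P_{jk} ∇_j P_{ik} = -κ n_i`. -/
theorem curvature_lemma {d : ℕ} (U : Set (Fin d → ℝ)) (hU : IsOpen U)
    (n : (Fin d → ℝ) → (Fin d → ℝ))
    (hdiff : ∀ i, DifferentiableOn ℝ (fun y => n y i) U)
    (hunit : ∀ y ∈ U, ∑ i, n y i * n y i = 1)
    (P : (Fin d → ℝ) → Matrix (Fin d) (Fin d) ℝ)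
    (hP : ∀ y, P y = 1 - Matrix.vecMulVec (n y) (n y))
    (κ : (Fin d → ℝ) → ℝ)
    (hκ : ∀ y, κ y = ∑ i, ∑ j, P y i j * fderiv ℝ (fun z => n z j) y (Pi.single i 1))
    (x : Fin d → ℝ) (hx : x ∈ U) (i : Fin d) :
    ∑ k, ∑ j, P x j k * fderiv ℝ (fun y => P y i k) x (Pi.single j 1)
      = -(κ x * n x i) := by
  have hn : ∀ k, DifferentiableAt ℝ (fun y => n y k) x :=
    fun k => (hdiff k).differentiableAt (hU.mem_nhds hx)
  have hPn : P x *ᵥ n x = 0 := by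
    rw [hP]
    exact one_sub_vecMulVec_self_mulVec_self (hunit x hx)
  have hDP : ∀ k j, fderiv ℝ (fun y => P y i k) x (Pi.single j 1)
      = -(n x i * fderiv ℝ (fun y => n y k) x (Pi.single j 1)
          + n x k * fderiv ℝ (fun y => n y i) x (Pi.single j 1)) := by
    simp only [hP]
    exact fun k j => fderiv_one_sub_vecMulVec_self_apply hn i k _
  calc ∑ k, ∑ j, P x j k * fderiv ℝ (fun y => P y i k) x (Pi.single j 1)
      = ∑ j, ∑ k, (-(n x i * (P x j k * fderiv ℝ (fun y => n y k) x (Pi.single j 1)))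
          - fderiv ℝ (fun y => n y i) x (Pi.single j 1) * (P x j k * n x k)) := by
        rw [Finset.sum_comm]
        refine Finset.sum_congr rfl fun j _ => Finset.sum_congr rfl fun k _ => ?_
        rw [hDP]
        ring
    _ = -(n x i * κ x)
          - ∑ j, fderiv ℝ (fun y => n y i) x (Pi.single j 1) * (P x *ᵥ n x) j := by
        simp only [Finset.sum_sub_distrib, Finset.sum_neg_distrib, ← Finset.mul_sum, hκ,
          mulVec, dotProduct]
    _ = -(κ x * n x i) := by
        rw [hPn]
        simp [mul_comm]
end

section
/- Combining the Itô–Stratonovich rule with the projection identity: if X solves dX_t = P(X_t) ∘ dB_t where P(x) = E − n(x)n(x)ᵀ is the C¹ tangential projection of a C² hypersurface, then the Itô form reads dX_t = P(X_t) dB_t − (1/2) κ(X_t) n(X_t) dt, where κ = Tr(P∇n). -/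
open Matrix intervalIntegral

/-!
Differentiating `P = E − n nᵀ` gives `∂ⱼ P_{ik} = −(∂ⱼ nᵢ) n_k − nᵢ ∂ⱼ n_k`. Contracting with
`P_{jk}` over `k` kills the first term, because `|n| = 1` makes `P n = 0`, while the second
contracts to `κ nᵢ`. So the Stratonovich correction `½ C` is the drift `−½ ∫ κ(X) n(X) dt`.
-/

section TangentialProjection

variable {ι : Type*} [DecidableEq ι]

def tangentialProjection (v : ι → ℝ) : Matrix ι ι ℝ := 1 - vecMulVec v v

theorem tangentialProjection_mulVec_self [Fintype ι] {v : ι → ℝ} (hv : v ⬝ᵥ v = 1) :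
    tangentialProjection v *ᵥ v = 0 := by
  rw [tangentialProjection, sub_mulVec, one_mulVec, vecMulVec_mulVec, hv, MulOpposite.op_one,
    one_smul, sub_self]

theorem fderiv_tangentialProjection_apply {E : Type*} [NormedAddCommGroup E] [NormedSpace ℝ E]
    {n : E → ι → ℝ} {y : E} {i k : ι} (hi : DifferentiableAt ℝ (fun z => n z i) y)
    (hk : DifferentiableAt ℝ (fun z => n z k) y) (v : E) :
    fderiv ℝ (fun z => tangentialProjection (n z) i k) y v =
      -(fderiv ℝ (fun z => n z i) y v * n y k + n y i * fderiv ℝ (fun z => n z k) y v) := by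
  simp only [tangentialProjection, Matrix.sub_apply, vecMulVec_apply]
  rw [fderiv_const_sub, fderiv_fun_mul hi hk]
  simp only [_root_.neg_apply, _root_.add_apply, _root_.smul_apply, smul_eq_mul]
  ring

theorem sum_tangentialProjection_mul_fderiv_tangentialProjection [Fintype ι]
    {n : (ι → ℝ) → ι → ℝ} {y : ι → ℝ}
    (hn : ∀ i, DifferentiableAt ℝ (fun z => n z i) y) (hunit : n y ⬝ᵥ n y = 1) (i : ι) :
    ∑ j, ∑ k, tangentialProjection (n y) j k *
        fderiv ℝ (fun z => tangentialProjection (n z) i k) y (Pi.single j 1) =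
      -((∑ j, ∑ k, tangentialProjection (n y) j k *
        fderiv ℝ (fun z => n z k) y (Pi.single j 1)) * n y i) := by
  have hPn : ∀ j, ∑ k, tangentialProjection (n y) j k * n y k = 0 := fun j =>
    congrFun (tangentialProjection_mulVec_self hunit) j
  simp_rw [fderiv_tangentialProjection_apply (hn _) (hn _), mul_neg, mul_add,
    Finset.sum_neg_distrib, Finset.sum_add_distrib,
    mul_left_comm (tangentialProjection (n y) _ _), ← Finset.mul_sum, hPn, mul_zero,
    Finset.sum_const_zero, zero_add, mul_comm (n y i)]

end TangentialProjection

theorem brownian_on_hypersurface_ito_form_general {d : ℕ} {Ω : Type*}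
    (n : (Fin d → ℝ) → (Fin d → ℝ))
    (hn : ∀ i, ContDiff ℝ 1 (fun y => n y i))
    (hunit : ∀ y, ∑ i, n y i * n y i = 1)
    (P : (Fin d → ℝ) → Matrix (Fin d) (Fin d) ℝ)
    (hP : ∀ y, P y = 1 - Matrix.vecMulVec (n y) (n y))
    (κ : (Fin d → ℝ) → ℝ)
    (hκ : ∀ y, κ y = ∑ i, ∑ j, P y i j * fderiv ℝ (fun z => n z j) y (Pi.single i 1))
    (X : ℝ → Ω → Fin d → ℝ)      -- driving Brownian motion and solution process
    (SI : ℝ → Ω → Fin d → ℝ)       -- the Itô integral `∫₀ᵗ P(X_s) dB_s`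
    (C : ℝ → Ω → Fin d → ℝ)        -- the Stratonovich correction (quadratic covariation)
    (hC : ∀ t ω i, C t ω i =
      ∫ s in (0:ℝ)..t, ∑ j, ∑ k,
        P (X s ω) j k * fderiv ℝ (fun y => P y i k) (X s ω) (Pi.single j 1))
    (hStrat : ∀ t ω i, X t ω i = X 0 ω i + SI t ω i + (1/2) * C t ω i) :
    ∀ t ω i, X t ω i = X 0 ω i + SI t ω i
      + ∫ s in (0:ℝ)..t, -((1/2) * κ (X s ω) * n (X s ω) i) := by
  obtain rfl : P = fun y => tangentialProjection (n y) := funext hP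
  have hdiff y i : DifferentiableAt ℝ (fun z => n z i) y :=
    ((hn i).differentiable one_ne_zero).differentiableAt
  intro t ω i
  rw [hStrat, hC, ← integral_const_mul]
  congr 1
  refine integral_congr fun s _ => ?_
  rw [sum_tangentialProjection_mul_fderiv_tangentialProjection (hdiff _) (hunit _), hκ]
  ring

/-- Brownian motion on a hypersurface: if `X` solves the Stratonovich SDE
`dX = P(X) ∘ dB` for the `C¹` tangential projection `P(x) = E − n(x)n(x)ᵀ` of a unit
normal field `n` (i.e. `X_t = X_0 + ∫₀ᵗ P(X) dB + ½ C_t`, where `SI` is the Itô integral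
and `C` the quadratic-covariation correction `C_t^i = ∫₀ᵗ Σ_{j,k} P_{jk} ∂_j P_{ik}(X_s) ds`),
then the Itô form reads `dX_t = P(X_t) dB_t − ½ κ(X_t) n(X_t) dt`, where `κ = Tr(P ∇n)`. -/
theorem brownian_on_hypersurface_ito_form {d : ℕ} {Ω : Type*}
    (n : (Fin d → ℝ) → (Fin d → ℝ))
    (hn : ∀ i, ContDiff ℝ 1 (fun y => n y i))
    (hunit : ∀ y, ∑ i, n y i * n y i = 1)
    (P : (Fin d → ℝ) → Matrix (Fin d) (Fin d) ℝ)
    (hP : ∀ y, P y = 1 - Matrix.vecMulVec (n y) (n y))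
    (κ : (Fin d → ℝ) → ℝ)
    (hκ : ∀ y, κ y = ∑ i, ∑ j, P y i j * fderiv ℝ (fun z => n z j) y (Pi.single i 1))
    (B X : ℝ → Ω → Fin d → ℝ)      -- driving Brownian motion and solution process
    (SI : ℝ → Ω → Fin d → ℝ)       -- the Itô integral `∫₀ᵗ P(X_s) dB_s`
    (C : ℝ → Ω → Fin d → ℝ)        -- the Stratonovich correction (quadratic covariation)
    (hC : ∀ t ω i, C t ω i =
      ∫ s in (0:ℝ)..t, ∑ j, ∑ k,
        P (X s ω) j k * fderiv ℝ (fun y => P y i k) (X s ω) (Pi.single j 1))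
    (hStrat : ∀ t ω i, X t ω i = X 0 ω i + SI t ω i + (1/2) * C t ω i) :
    ∀ t ω i, X t ω i = X 0 ω i + SI t ω i
      + ∫ s in (0:ℝ)..t, -((1/2) * κ (X s ω) * n (X s ω) i) :=
  brownian_on_hypersurface_ito_form_general n hn hunit P hP κ hκ X SI C hC hStrat
end
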